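/- arXiv:1809.01714 — 4 statements merged into one kernel-verified Lean document; each statement's English description precedes it below -/
import Mathlib

section
/- Let M and N be p-typical Cartier modules. Define M ⊠ N as the quotient of (M ⊗_ℤ N)[V] = ⊕_{k≥0}(M ⊗ N)·V^k by the subgroup generated by (m ⊗ V n)V^k − (F m ⊗ n)V^{k+1} and (V m ⊗ n)V^k − (m ⊗ F n)V^{k+1}, with V acting by the shift and F acting by F((m⊗n)V^0) = (Fm ⊗ Fn)V^0 and F((m⊗n)V^k) = p(m⊗n)V^{k−1} for k ≥ 1. Then F and V descend to well-defined additive endomorphisms of M ⊠ N satisfying F∘V = p, so M ⊠ N is a p-typical Cartier module. -/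
open scoped TensorProduct

section Box

variable {M N : Type*} [AddCommGroup M] [AddCommGroup N]

/-- The subgroup of relations defining the Cartier module tensor product `M ⊠ N`:
it is generated by `(m ⊗ Vn)Vᵏ − (Fm ⊗ n)Vᵏ⁺¹` and `(Vm ⊗ n)Vᵏ − (m ⊗ Fn)Vᵏ⁺¹`. -/
noncomputable def boxRel (FM VM : M →+ M) (FN VN : N →+ N) :
    AddSubgroup (ℕ →₀ TensorProduct ℤ M N) :=
  AddSubgroup.closure
    ({x | ∃ (m : M) (n : N) (k : ℕ),
        x = Finsupp.single k (m ⊗ₜ[ℤ] VN n) - Finsupp.single (k + 1) (FM m ⊗ₜ[ℤ] n)} ∪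
     {x | ∃ (m : M) (n : N) (k : ℕ),
        x = Finsupp.single k (VM m ⊗ₜ[ℤ] n) - Finsupp.single (k + 1) (m ⊗ₜ[ℤ] FN n)})

/-- The Verschiebung on `⊕_{k≥0} (M ⊗ N)·Vᵏ`: the shift. -/
noncomputable def boxV : (ℕ →₀ TensorProduct ℤ M N) → (ℕ →₀ TensorProduct ℤ M N) :=
  fun f => Finsupp.mapDomain Nat.succ f

/-- The Frobenius on `⊕_{k≥0} (M ⊗ N)·Vᵏ`: it is `F_M ⊗ F_N` on the `V⁰`-summand and
`p` times the downward shift on the higher summands. -/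
noncomputable def boxF (p : ℕ) (FM : M →+ M) (FN : N →+ N) :
    (ℕ →₀ TensorProduct ℤ M N) → (ℕ →₀ TensorProduct ℤ M N) :=
  fun f =>
    Finsupp.single 0 (TensorProduct.map FM.toIntLinearMap FN.toIntLinearMap (f 0)) +
      p • Finsupp.comapDomain Nat.succ f (Nat.succ_injective.injOn)

end Box

section Aux

variable {M N : Type*} [AddCommGroup M] [AddCommGroup N]

/-- `boxV` as an additive homomorphism. -/
noncomputable def boxVHom : (ℕ →₀ TensorProduct ℤ M N) →+ (ℕ →₀ TensorProduct ℤ M N) :=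
  Finsupp.mapDomain.addMonoidHom Nat.succ

lemma boxVHom_apply (f : ℕ →₀ TensorProduct ℤ M N) : boxVHom f = boxV f := rfl

/-- `boxF` as an additive homomorphism. -/
noncomputable def boxFHom (p : ℕ) (FM : M →+ M) (FN : N →+ N) :
    (ℕ →₀ TensorProduct ℤ M N) →+ (ℕ →₀ TensorProduct ℤ M N) :=
  AddMonoidHom.mk' (boxF p FM FN) (by
    intro x y
    simp only [boxF, Finsupp.add_apply, map_add, Finsupp.single_add,
      Finsupp.comapDomain_add_of_injective Nat.succ_injective, smul_add]
    abel)

lemma boxFHom_apply (p : ℕ) (FM : M →+ M) (FN : N →+ N) (f : ℕ →₀ TensorProduct ℤ M N) :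
    boxFHom p FM FN f = boxF p FM FN f := rfl

lemma comapDomain_succ_single_zero (a : TensorProduct ℤ M N) :
    Finsupp.comapDomain Nat.succ (Finsupp.single 0 a) (Nat.succ_injective.injOn) = 0 := by
  ext k
  simp [Finsupp.comapDomain_apply, Finsupp.single_apply]

lemma boxF_single_zero (p : ℕ) (FM : M →+ M) (FN : N →+ N) (a : TensorProduct ℤ M N) :
    boxF p FM FN (Finsupp.single 0 a) =
      Finsupp.single 0 (TensorProduct.map FM.toIntLinearMap FN.toIntLinearMap a) := by
  simp [boxF, comapDomain_succ_single_zero]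

lemma boxF_single_succ (p : ℕ) (FM : M →+ M) (FN : N →+ N) (k : ℕ)
    (a : TensorProduct ℤ M N) :
    boxF p FM FN (Finsupp.single (k + 1) a) = p • Finsupp.single k a := by
  have h : Finsupp.comapDomain Nat.succ (Finsupp.single (Nat.succ k) a)
      (Nat.succ_injective.injOn) = Finsupp.single k a :=
    Finsupp.comapDomain_single Nat.succ k a _
  simp [boxF, Finsupp.single_apply, h]

lemma boxF_boxV (p : ℕ) (FM : M →+ M) (FN : N →+ N) (f : ℕ →₀ TensorProduct ℤ M N) :
    boxF p FM FN (boxV f) = p • f := by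
  have h0 : (boxV f : ℕ →₀ TensorProduct ℤ M N) 0 = 0 := by
    apply Finsupp.mapDomain_notin_range
    rintro ⟨k, hk⟩
    exact Nat.succ_ne_zero k hk
  have hc : Finsupp.comapDomain Nat.succ (boxV f) (Nat.succ_injective.injOn) = f := by
    ext k
    rw [Finsupp.comapDomain_apply]
    exact Finsupp.mapDomain_apply Nat.succ_injective f k
  simp [boxF, h0, hc]

end Aux

/-- for `p`-typical Cartier modules `M` and `N`, the operators `F` and `V`
descend to well-defined additive endomorphisms of the quotient
`M ⊠ N = (⊕_{k≥0}(M ⊗ N)·Vᵏ) / (relations)` satisfying `F ∘ V = p`, so `M ⊠ N` is a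
`p`-typical Cartier module. -/
theorem stmt_5 (p : ℕ) (hp : p.Prime)
    {M N : Type*} [AddCommGroup M] [AddCommGroup N]
    (FM VM : M →+ M) (FN VN : N →+ N)
    (hM : ∀ x, FM (VM x) = p • x) (hN : ∀ x, FN (VN x) = p • x) :
    ∃ F' V' : (ℕ →₀ TensorProduct ℤ M N) ⧸ boxRel FM VM FN VN →+
        (ℕ →₀ TensorProduct ℤ M N) ⧸ boxRel FM VM FN VN,
      (∀ t, F' (QuotientAddGroup.mk t) = QuotientAddGroup.mk (boxF p FM FN t)) ∧
      (∀ t, V' (QuotientAddGroup.mk t) = QuotientAddGroup.mk (boxV t)) ∧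
      (∀ q, F' (V' q) = p • q) := by
  set S := boxRel FM VM FN VN with hS
  -- V preserves the relations
  have hV : ∀ x ∈ S, (boxVHom x : ℕ →₀ TensorProduct ℤ M N) ∈ S := by
    have : S ≤ AddSubgroup.comap boxVHom S := by
      rw [hS, boxRel]
      apply (AddSubgroup.closure_le _).mpr
      rintro x (⟨m, n, k, rfl⟩ | ⟨m, n, k, rfl⟩) <;>
        simp only [SetLike.mem_coe, AddSubgroup.mem_comap, map_sub, boxVHom_apply, boxV,
          Finsupp.mapDomain_single]
      · exact AddSubgroup.subset_closure (Or.inl ⟨m, n, k + 1, by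
          simp [Nat.succ_eq_add_one]⟩)
      · exact AddSubgroup.subset_closure (Or.inr ⟨m, n, k + 1, by
          simp [Nat.succ_eq_add_one]⟩)
    exact fun x hx => this hx
  -- F preserves the relations
  have hF : ∀ x ∈ S, (boxFHom p FM FN x : ℕ →₀ TensorProduct ℤ M N) ∈ S := by
    have : S ≤ AddSubgroup.comap (boxFHom p FM FN) S := by
      rw [hS, boxRel]
      apply (AddSubgroup.closure_le _).mpr
      rintro x (⟨m, n, k, rfl⟩ | ⟨m, n, k, rfl⟩) <;>
        simp only [SetLike.mem_coe, AddSubgroup.mem_comap, map_sub, boxFHom_apply] <;>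
        rcases k with _ | k
      · rw [boxF_single_zero, boxF_single_succ]
        have : (TensorProduct.map FM.toIntLinearMap FN.toIntLinearMap) (m ⊗ₜ[ℤ] VN n)
            = p • (FM m ⊗ₜ[ℤ] n) := by
          simp [TensorProduct.map_tmul, hN n, TensorProduct.tmul_smul]
        rw [this, ← Finsupp.smul_single, sub_self]
        exact zero_mem _
      · rw [boxF_single_succ, boxF_single_succ, ← nsmul_sub]
        refine nsmul_mem (AddSubgroup.subset_closure ?_) p
        exact Or.inl ⟨m, n, k, rfl⟩
      · rw [boxF_single_zero, boxF_single_succ]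
        have : (TensorProduct.map FM.toIntLinearMap FN.toIntLinearMap) (VM m ⊗ₜ[ℤ] n)
            = p • (m ⊗ₜ[ℤ] FN n) := by
          simp [TensorProduct.map_tmul, hM m, TensorProduct.smul_tmul']
        rw [this, ← Finsupp.smul_single, sub_self]
        exact zero_mem _
      · rw [boxF_single_succ, boxF_single_succ, ← nsmul_sub]
        refine nsmul_mem (AddSubgroup.subset_closure ?_) p
        exact Or.inr ⟨m, n, k, rfl⟩
    exact fun x hx => this hx
  refine ⟨QuotientAddGroup.lift S ((QuotientAddGroup.mk' S).comp (boxFHom p FM FN))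
      (fun x hx => ?_),
    QuotientAddGroup.lift S ((QuotientAddGroup.mk' S).comp boxVHom)
      (fun x hx => ?_), ?_, ?_, ?_⟩
  · simpa [QuotientAddGroup.eq_zero_iff] using hF x hx
  · simpa [QuotientAddGroup.eq_zero_iff] using hV x hx
  · intro t; rfl
  · intro t; rfl
  · intro q
    induction q using QuotientAddGroup.induction_on with
    | H t =>
      show QuotientAddGroup.mk (boxFHom p FM FN (boxVHom t)) = _
      rw [boxVHom_apply, boxFHom_apply, boxF_boxV]
      exact map_nsmul (QuotientAddGroup.mk' S) p t
end

section
/- For p-typical Cartier modules M and N there is a natural isomorphism of abelian groups coker(V : M ⊠ N → M ⊠ N) ≅ coker(V : M → M) ⊗_ℤ coker(V : N → N). In other words, reduction modulo V is a symmetric monoidal functor from Cartier modules with ⊠ to abelian groups with ⊗_ℤ. -/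
open scoped TensorProduct

instance boxRel_quot_normal {M N : Type*} [AddCommGroup M] [AddCommGroup N]
    (FM VM : M →+ M) (FN VN : N →+ N)
    (K : AddSubgroup ((ℕ →₀ TensorProduct ℤ M N) ⧸ boxRel FM VM FN VN)) : K.Normal :=
  ⟨fun n hn g => by rwa [add_comm g n, add_neg_cancel_right]⟩

@[reducible]
noncomputable def boxQQ_addCommGroup {M N : Type*} [AddCommGroup M] [AddCommGroup N]
    (FM VM : M →+ M) (FN VN : N →+ N)
    (V' : (ℕ →₀ TensorProduct ℤ M N) ⧸ boxRel FM VM FN VN →+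
        (ℕ →₀ TensorProduct ℤ M N) ⧸ boxRel FM VM FN VN) :
    AddCommGroup (((ℕ →₀ TensorProduct ℤ M N) ⧸ boxRel FM VM FN VN) ⧸ V'.range) :=
  { (inferInstance : AddGroup (((ℕ →₀ TensorProduct ℤ M N) ⧸ boxRel FM VM FN VN) ⧸ V'.range)) with
    add_comm := fun a b => QuotientAddGroup.induction_on a fun a =>
      QuotientAddGroup.induction_on b fun b => by
        rw [← QuotientAddGroup.mk_add, ← QuotientAddGroup.mk_add]
        exact congrArg _ (QuotientAddGroup.induction_on a fun a =>
          QuotientAddGroup.induction_on b fun b => by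
            rw [← QuotientAddGroup.mk_add, ← QuotientAddGroup.mk_add, add_comm]) }

section Aux

attribute [local instance] boxQQ_addCommGroup

variable {M N : Type*} [AddCommGroup M] [AddCommGroup N]
  (FM VM : M →+ M) (FN VN : N →+ N)
  (V' : (ℕ →₀ TensorProduct ℤ M N) ⧸ boxRel FM VM FN VN →+
      (ℕ →₀ TensorProduct ℤ M N) ⧸ boxRel FM VM FN VN)

/-- projection to the double quotient -/
noncomputable def mkQQ :
    (ℕ →₀ TensorProduct ℤ M N) →+
      ((ℕ →₀ TensorProduct ℤ M N) ⧸ boxRel FM VM FN VN) ⧸ V'.range :=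
  (QuotientAddGroup.mk' V'.range).comp (QuotientAddGroup.mk' (boxRel FM VM FN VN))

variable (hV' : ∀ t, V' (QuotientAddGroup.mk t) = QuotientAddGroup.mk (boxV t))
include hV'

theorem mkQQ_single_succ (k : ℕ) (t : TensorProduct ℤ M N) :
    mkQQ FM VM FN VN V' (Finsupp.single (k + 1) t) = 0 := by
  have h1 : Finsupp.single (k + 1) t = boxV (Finsupp.single k t) := by
    simp [boxV, Finsupp.mapDomain_single]
  rw [h1, mkQQ]
  simp only [AddMonoidHom.coe_comp, Function.comp_apply, QuotientAddGroup.mk'_apply]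
  rw [← hV']
  exact (QuotientAddGroup.eq_zero_iff _).2 ⟨_, rfl⟩

theorem mkQQ_rel {s : ℕ →₀ TensorProduct ℤ M N} (hs : s ∈ boxRel FM VM FN VN) :
    mkQQ FM VM FN VN V' s = 0 := by
  rw [mkQQ]
  simp only [AddMonoidHom.coe_comp, Function.comp_apply, QuotientAddGroup.mk'_apply]
  rw [(QuotientAddGroup.eq_zero_iff _).2 hs]
  simp

theorem mkQQ_left (m : M) (n : N) :
    mkQQ FM VM FN VN V' (Finsupp.single 0 (VM m ⊗ₜ[ℤ] n)) = 0 := by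
  have hrel : Finsupp.single 0 (VM m ⊗ₜ[ℤ] n) - Finsupp.single 1 (m ⊗ₜ[ℤ] FN n)
      ∈ boxRel FM VM FN VN :=
    AddSubgroup.subset_closure (Or.inr ⟨m, n, 0, rfl⟩)
  have := mkQQ_rel FM VM FN VN V' hV' hrel
  rw [map_sub, sub_eq_zero] at this
  rw [this, mkQQ_single_succ FM VM FN VN V' hV']

theorem mkQQ_right (m : M) (n : N) :
    mkQQ FM VM FN VN V' (Finsupp.single 0 (m ⊗ₜ[ℤ] VN n)) = 0 := by
  have hrel : Finsupp.single 0 (m ⊗ₜ[ℤ] VN n) - Finsupp.single 1 (FM m ⊗ₜ[ℤ] n)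
      ∈ boxRel FM VM FN VN :=
    AddSubgroup.subset_closure (Or.inl ⟨m, n, 0, rfl⟩)
  have := mkQQ_rel FM VM FN VN V' hV' hrel
  rw [map_sub, sub_eq_zero] at this
  rw [this, mkQQ_single_succ FM VM FN VN V' hV']

/-- for fixed `x : M`, the map `y ↦ class of single 0 (x ⊗ y)` -/
noncomputable def innerAux (x : M) :
    N →+ (((ℕ →₀ TensorProduct ℤ M N) ⧸ boxRel FM VM FN VN) ⧸ V'.range) :=
  (mkQQ FM VM FN VN V').comp <| (Finsupp.singleAddHom 0).comp
    (TensorProduct.mk ℤ M N x).toAddMonoidHom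

omit hV' in
theorem innerAux_apply (x : M) (y : N) :
    innerAux FM VM FN VN V' x y = mkQQ FM VM FN VN V' (Finsupp.single 0 (x ⊗ₜ[ℤ] y)) := rfl

/-- descent of `innerAux` to `N ⧸ VN.range`, as a linear map -/
noncomputable def innerQ (x : M) :
    (N ⧸ VN.range) →ₗ[ℤ]
      (((ℕ →₀ TensorProduct ℤ M N) ⧸ boxRel FM VM FN VN) ⧸ V'.range) :=
  (QuotientAddGroup.lift VN.range (innerAux FM VM FN VN V' x)
    (by rintro _ ⟨n, rfl⟩; exact mkQQ_right FM VM FN VN V' hV' x n)).toIntLinearMap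

theorem innerQ_apply (x : M) (y : N) :
    innerQ FM VM FN VN V' hV' x (QuotientAddGroup.mk y) =
      mkQQ FM VM FN VN V' (Finsupp.single 0 (x ⊗ₜ[ℤ] y)) := rfl

/-- the bilinear map descended to both quotients -/
noncomputable def bilQ :
    (M ⧸ VM.range) →ₗ[ℤ] ((N ⧸ VN.range) →ₗ[ℤ]
      (((ℕ →₀ TensorProduct ℤ M N) ⧸ boxRel FM VM FN VN) ⧸ V'.range)) := by
  refine AddMonoidHom.toIntLinearMap (QuotientAddGroup.lift VM.range
    { toFun := fun x => innerQ FM VM FN VN V' hV' x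
      map_zero' := ?_
      map_add' := ?_ } ?_)
  · apply LinearMap.ext
    intro y
    refine QuotientAddGroup.induction_on y fun n => ?_
    simp [innerQ_apply, TensorProduct.zero_tmul]
  · intro a b
    apply LinearMap.ext
    intro y
    refine QuotientAddGroup.induction_on y fun n => ?_
    simp [innerQ_apply, TensorProduct.add_tmul]
  · rintro _ ⟨m, rfl⟩
    apply LinearMap.ext
    intro y
    refine QuotientAddGroup.induction_on y fun n => ?_
    simpa [innerQ_apply] using mkQQ_left FM VM FN VN V' hV' m n

theorem bilQ_apply (x : M) (y : N) :
    bilQ FM VM FN VN V' hV' (QuotientAddGroup.mk x) (QuotientAddGroup.mk y) =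
      mkQQ FM VM FN VN V' (Finsupp.single 0 (x ⊗ₜ[ℤ] y)) := rfl

/-- inverse map from the tensor product of cokernels -/
noncomputable def invMap :
    TensorProduct ℤ (M ⧸ VM.range) (N ⧸ VN.range) →+
      (((ℕ →₀ TensorProduct ℤ M N) ⧸ boxRel FM VM FN VN) ⧸ V'.range) :=
  (TensorProduct.lift (bilQ FM VM FN VN V' hV')).toAddMonoidHom

theorem invMap_tmul (x : M) (y : N) :
    invMap FM VM FN VN V' hV'
        ((QuotientAddGroup.mk x : M ⧸ VM.range) ⊗ₜ[ℤ] (QuotientAddGroup.mk y)) =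
      mkQQ FM VM FN VN V' (Finsupp.single 0 (x ⊗ₜ[ℤ] y)) := by
  simp [invMap, TensorProduct.lift.tmul, bilQ_apply]

/-- the projection `M ⊗ N → (M/VM) ⊗ (N/VN)` on the `V⁰` summand -/
noncomputable def projMap :
    (ℕ →₀ TensorProduct ℤ M N) →+ TensorProduct ℤ (M ⧸ VM.range) (N ⧸ VN.range) :=
  (TensorProduct.map (QuotientAddGroup.mk' VM.range).toIntLinearMap
    (QuotientAddGroup.mk' VN.range).toIntLinearMap).toAddMonoidHom.comp
    (Finsupp.applyAddHom 0)

omit hV' in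
theorem projMap_single_zero (x : M) (y : N) :
    projMap VM VN (Finsupp.single 0 (x ⊗ₜ[ℤ] y)) =
      (QuotientAddGroup.mk x : M ⧸ VM.range) ⊗ₜ[ℤ] (QuotientAddGroup.mk y) := by
  simp [projMap]

omit hV' in
theorem projMap_single_succ (k : ℕ) (t : TensorProduct ℤ M N) :
    projMap VM VN (Finsupp.single (k + 1) t) = 0 := by
  simp [projMap, Finsupp.single_apply]

omit hV' in
theorem projMap_rel : ∀ s ∈ boxRel FM VM FN VN, projMap VM VN s = 0 := by
  intro s hs
  have : boxRel FM VM FN VN ≤ (projMap VM VN (M := M) (N := N)).ker := by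
    rw [boxRel]
    rw [AddSubgroup.closure_le]
    rintro x (⟨m, n, k, rfl⟩ | ⟨m, n, k, rfl⟩) <;>
    · simp only [SetLike.mem_coe, AddMonoidHom.mem_ker, map_sub,
        projMap_single_succ, sub_zero]
      cases k with
      | zero =>
        simp only [projMap, AddMonoidHom.coe_comp, Function.comp_apply,
          Finsupp.applyAddHom_apply, Finsupp.single_eq_same, LinearMap.toAddMonoidHom_coe,
          TensorProduct.map_tmul]
        simp only [AddMonoidHom.coe_toIntLinearMap, QuotientAddGroup.mk'_apply]
        first
        | rw [show ((QuotientAddGroup.mk (VN n) : N ⧸ VN.range)) = 0 from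
            (QuotientAddGroup.eq_zero_iff _).2 ⟨n, rfl⟩, TensorProduct.tmul_zero]
        | rw [show ((QuotientAddGroup.mk (VM m) : M ⧸ VM.range)) = 0 from
            (QuotientAddGroup.eq_zero_iff _).2 ⟨m, rfl⟩, TensorProduct.zero_tmul]
      | succ k =>
        rw [projMap_single_succ]
  exact this hs

theorem fwd_aux :
    ∀ x ∈ V'.range,
      QuotientAddGroup.lift (boxRel FM VM FN VN) (projMap VM VN)
        (fun s hs => AddMonoidHom.mem_ker.2 (projMap_rel FM VM FN VN s hs)) x = 0 := by
  rintro _ ⟨t, rfl⟩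
  refine QuotientAddGroup.induction_on t fun s => ?_
  rw [hV']
  rw [QuotientAddGroup.lift_mk]
  have h0 : boxV s 0 = 0 := by
    apply Finsupp.mapDomain_notin_range
    simp [Set.range, Nat.succ_ne_zero]
  rw [projMap]
  simp only [AddMonoidHom.coe_comp, Function.comp_apply, Finsupp.applyAddHom_apply, h0,
    map_zero]

/-- the forward map from the double quotient -/
noncomputable def fwdMap :
    (((ℕ →₀ TensorProduct ℤ M N) ⧸ boxRel FM VM FN VN) ⧸ V'.range) →+
      TensorProduct ℤ (M ⧸ VM.range) (N ⧸ VN.range) :=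
  QuotientAddGroup.lift V'.range
    (QuotientAddGroup.lift (boxRel FM VM FN VN) (projMap VM VN)
      (fun s hs => AddMonoidHom.mem_ker.2 (projMap_rel FM VM FN VN s hs))) (fun x hx => AddMonoidHom.mem_ker.2 (fwd_aux FM VM FN VN V' hV' x hx))

theorem fwdMap_mkQQ (s : ℕ →₀ TensorProduct ℤ M N) :
    fwdMap FM VM FN VN V' hV' (mkQQ FM VM FN VN V' s) = projMap VM VN s := rfl

end Aux

/-- for `p`-typical Cartier modules `M` and `N` there is a natural
isomorphism `coker(V : M ⊠ N → M ⊠ N) ≅ coker(V_M) ⊗_ℤ coker(V_N)`, induced by the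
projection to the `V⁰`-summand; i.e. reduction mod `V` is symmetric monoidal.  Here
`V'` denotes the descended Verschiebung on `M ⊠ N`. -/
theorem stmt_8 (p : ℕ) (hp : p.Prime)
    {M N : Type*} [AddCommGroup M] [AddCommGroup N]
    (FM VM : M →+ M) (FN VN : N →+ N)
    (hM : ∀ x, FM (VM x) = p • x) (hN : ∀ x, FN (VN x) = p • x)
    (V' : (ℕ →₀ TensorProduct ℤ M N) ⧸ boxRel FM VM FN VN →+
      (ℕ →₀ TensorProduct ℤ M N) ⧸ boxRel FM VM FN VN)
    (hV' : ∀ t, V' (QuotientAddGroup.mk t) = QuotientAddGroup.mk (boxV t)) :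
    ∃ e : (((ℕ →₀ TensorProduct ℤ M N) ⧸ boxRel FM VM FN VN) ⧸ V'.range) ≃+
        TensorProduct ℤ (M ⧸ VM.range) (N ⧸ VN.range),
      ∀ (x : M) (y : N),
        e (QuotientAddGroup.mk (QuotientAddGroup.mk (Finsupp.single 0 (x ⊗ₜ[ℤ] y)))) =
          (QuotientAddGroup.mk x : M ⧸ VM.range) ⊗ₜ[ℤ]
            (QuotientAddGroup.mk y : N ⧸ VN.range) := by
  have single_case : ∀ (k : ℕ) (t : TensorProduct ℤ M N),
      invMap FM VM FN VN V' hV'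
          (fwdMap FM VM FN VN V' hV' (mkQQ FM VM FN VN V' (Finsupp.single k t))) =
        mkQQ FM VM FN VN V' (Finsupp.single k t) := by
    intro k t
    induction t using TensorProduct.induction_on with
    | zero => simp
    | tmul x y =>
      rw [fwdMap_mkQQ]
      cases k with
      | zero =>
        rw [projMap_single_zero]
        rw [invMap_tmul FM VM FN VN V' hV']
      | succ k =>
        rw [projMap_single_succ, map_zero, mkQQ_single_succ FM VM FN VN V' hV']
    | add a b iha ihb =>
      rw [Finsupp.single_add, map_add, map_add, map_add, iha, ihb]
  have key : ∀ s : ℕ →₀ TensorProduct ℤ M N,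
      invMap FM VM FN VN V' hV' (fwdMap FM VM FN VN V' hV' (mkQQ FM VM FN VN V' s)) =
        mkQQ FM VM FN VN V' s := by
    intro s
    induction s using Finsupp.induction with
    | zero => simp
    | single_add k t f _ _ ih =>
      rw [map_add, map_add, map_add, ih, single_case]
  refine ⟨{ toFun := fwdMap FM VM FN VN V' hV'
            invFun := invMap FM VM FN VN V' hV'
            left_inv := ?_
            right_inv := ?_
            map_add' := map_add _ }, ?_⟩
  · intro z
    refine QuotientAddGroup.induction_on z fun w => ?_
    refine QuotientAddGroup.induction_on w fun s => ?_
    exact key s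
  · intro t
    induction t using TensorProduct.induction_on with
    | zero => simp
    | tmul x y =>
      refine QuotientAddGroup.induction_on x fun m => ?_
      refine QuotientAddGroup.induction_on y fun n => ?_
      rw [invMap_tmul FM VM FN VN V' hV', fwdMap_mkQQ, projMap_single_zero]
    | add a b ha hb => rw [map_add, map_add, ha, hb]
  · intro x y
    exact fwdMap_mkQQ FM VM FN VN V' hV' _ |>.trans (projMap_single_zero VM VN x y)
end

section
/- Let M be a p-typical Cartier module on which V is injective. Then V is also injective on the V-adic completion M̂ = lim_n M/V^n M (where V acts on M̂ via the compatible maps V : M/V^n M → M/V^{n+1} M, equivalently via the induced endomorphism on the limit). -/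
section Tower

variable {M : Type*} [AddCommGroup M]

/-- The transition map `M/Vⁿ⁺¹M → M/VⁿM` of the `V`-adic tower, induced by the
identity of `M`. -/
noncomputable def towerProj (VM : AddMonoid.End M) (n : ℕ) :
    M ⧸ (VM ^ (n + 1) : AddMonoid.End M).range →+
      M ⧸ (VM ^ n : AddMonoid.End M).range :=
  QuotientAddGroup.map _ _ (AddMonoidHom.id M) (by
    rintro x ⟨y, rfl⟩
    exact ⟨VM y, by rw [pow_succ]; rfl⟩)

/-- The endomorphism of `M/VⁿM` induced by `V`. -/
noncomputable def towerV (VM : AddMonoid.End M) (n : ℕ) :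
    M ⧸ (VM ^ n : AddMonoid.End M).range →+
      M ⧸ (VM ^ n : AddMonoid.End M).range :=
  QuotientAddGroup.map _ _ (VM : M →+ M) (by
    rintro x ⟨y, rfl⟩
    refine ⟨VM y, ?_⟩
    show (VM ^ n) (VM y) = VM ((VM ^ n) y)
    have h1 : (VM ^ (n + 1)) y = (VM ^ n) (VM y) := by rw [pow_succ]; rfl
    have h2 : (VM ^ (n + 1)) y = VM ((VM ^ n) y) := by rw [pow_succ']; rfl
    exact h1.symm.trans h2)

end Tower

/-- if `V` is injective on the `p`-typical Cartier module `M`, then the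
induced endomorphism of the `V`-adic completion `lim_n M/VⁿM` is injective.  The
completion is presented as the set of compatible sequences `(fₙ)ₙ`, `fₙ ∈ M/VⁿM`. -/
theorem stmt_9 (p : ℕ) (hp : p.Prime)
    {M : Type*} [AddCommGroup M] (FM VM : AddMonoid.End M)
    (hFV : ∀ x, FM (VM x) = p • x) (hVinj : Function.Injective VM) :
    ∀ f g : ∀ n : ℕ, M ⧸ (VM ^ n : AddMonoid.End M).range,
      (∀ n, towerProj VM n (f (n + 1)) = f n) →
      (∀ n, towerProj VM n (g (n + 1)) = g n) →
      (∀ n, towerV VM n (f n) = towerV VM n (g n)) → f = g := by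
  intro f g hf hg hV
  funext n
  rw [← hf n, ← hg n, ← sub_eq_zero, ← map_sub]
  have ha : towerV VM (n + 1) (f (n + 1) - g (n + 1)) = 0 := by
    rw [map_sub, hV (n + 1), sub_self]
  obtain ⟨x, hx⟩ := QuotientAddGroup.mk_surjective (f (n + 1) - g (n + 1))
  rw [← hx] at ha ⊢
  have hmem : VM x ∈ (VM ^ (n + 1) : AddMonoid.End M).range := by
    have : towerV VM (n + 1) ((x : M ⧸ (VM ^ (n+1) : AddMonoid.End M).range)) =
        ((VM x : M) : M ⧸ (VM ^ (n+1) : AddMonoid.End M).range) := rfl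
    rw [this] at ha
    exact (QuotientAddGroup.eq_zero_iff _).mp ha
  obtain ⟨y, hy⟩ := hmem
  have hy' : VM ((VM ^ n) y) = VM x := by
    rw [← hy]; rw [pow_succ']; rfl
  have hxy : x = (VM ^ n) y := (hVinj hy').symm
  have : towerProj VM n ((x : M ⧸ (VM ^ (n+1) : AddMonoid.End M).range)) =
      ((x : M) : M ⧸ (VM ^ n : AddMonoid.End M).range) := rfl
  rw [this, QuotientAddGroup.eq_zero_iff]
  exact ⟨y, hxy.symm⟩
end

section
/- Let f : M → N be a homomorphism of p-typical Cartier modules such that V is injective on both M and N. Then the induced map on V-adic completions lim_n M/V^nM → lim_n N/V^nN is an isomorphism if and only if the induced map M/VM → N/VN is an isomorphism. -/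
section Tower

variable {M N : Type*} [AddCommGroup M] [AddCommGroup N]

/-- The `V`-adic completion `lim_n M/VⁿM`, presented as compatible sequences. -/
def towerLim (VM : AddMonoid.End M) : Type _ :=
  {g : ∀ n : ℕ, M ⧸ (VM ^ n : AddMonoid.End M).range //
    ∀ n, towerProj VM n (g (n + 1)) = g n}

/-- The map `M/VⁿM → N/VⁿN` induced by a map `f` commuting with the Verschiebungen. -/
noncomputable def towerMap (VM : AddMonoid.End M) (VN : AddMonoid.End N) (f : M →+ N)
    (hf : ∀ x, f (VM x) = VN (f x)) (n : ℕ) :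
    M ⧸ (VM ^ n : AddMonoid.End M).range →+
      N ⧸ (VN ^ n : AddMonoid.End N).range :=
  QuotientAddGroup.map _ _ f (by
    rintro x ⟨y, rfl⟩
    refine ⟨f y, ?_⟩
    show (VN ^ n) (f y) = f ((VM ^ n) y)
    induction n with
    | zero => simp
    | succ m ih =>
        have h1 : (VM ^ (m + 1)) y = VM ((VM ^ m) y) := by rw [pow_succ']; rfl
        have h2 : (VN ^ (m + 1)) (f y) = VN ((VN ^ m) (f y)) := by rw [pow_succ']; rfl
        rw [h1, h2, hf, ih])

/-- The map on `V`-adic completions induced by a map commuting with the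
Verschiebungen. -/
noncomputable def towerLimMap (VM : AddMonoid.End M) (VN : AddMonoid.End N) (f : M →+ N)
    (hf : ∀ x, f (VM x) = VN (f x)) : towerLim VM → towerLim VN :=
  fun g => ⟨fun n => towerMap VM VN f hf n (g.1 n), by
    intro n
    show towerProj VN n (towerMap VM VN f hf (n + 1) (g.1 (n + 1))) =
      towerMap VM VN f hf n (g.1 n)
    rw [← g.2 n]
    obtain ⟨x, hx⟩ := QuotientAddGroup.mk_surjective (g.1 (n + 1))
    rw [← hx]
    simp only [towerMap, towerProj, QuotientAddGroup.map_mk, AddMonoidHom.id_apply]⟩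

end Tower
namespace Stmt11Aux

variable {M N : Type*} [AddCommGroup M] [AddCommGroup N]

lemma end_pow_apply (VM : AddMonoid.End M) (n : ℕ) (x : M) :
    (VM ^ (n + 1)) x = (VM ^ n) (VM x) := by
  rw [pow_succ]; rfl

lemma end_pow_apply' (VM : AddMonoid.End M) (n : ℕ) (x : M) :
    (VM ^ (n + 1)) x = VM ((VM ^ n) x) := by
  rw [pow_succ']; rfl

lemma end_pow_zero_apply (VM : AddMonoid.End M) (x : M) :
    (VM ^ 0) x = x := by
  rw [pow_zero]; rfl

lemma map_pow_comm (VM : AddMonoid.End M) (VN : AddMonoid.End N) (f : M →+ N)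
    (hf : ∀ x, f (VM x) = VN (f x)) (n : ℕ) (x : M) :
    f ((VM ^ n) x) = (VN ^ n) (f x) := by
  induction n with
  | zero => rw [end_pow_zero_apply, end_pow_zero_apply]
  | succ m ih => rw [end_pow_apply', hf, ih, end_pow_apply']

lemma pow_inj (VM : AddMonoid.End M) (h : Function.Injective VM) (n : ℕ) :
    Function.Injective (VM ^ n : AddMonoid.End M) := by
  induction n with
  | zero => intro a b hab; rwa [end_pow_zero_apply, end_pow_zero_apply] at hab
  | succ m ih =>
      intro a b hab
      rw [end_pow_apply, end_pow_apply] at hab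
      exact h (ih hab)

lemma towerMap_mk (VM : AddMonoid.End M) (VN : AddMonoid.End N) (f : M →+ N)
    (hf : ∀ x, f (VM x) = VN (f x)) (n : ℕ) (x : M) :
    towerMap VM VN f hf n (QuotientAddGroup.mk x) = QuotientAddGroup.mk (f x) := rfl

lemma towerProj_mk (VM : AddMonoid.End M) (n : ℕ) (x : M) :
    towerProj VM n (QuotientAddGroup.mk x) = QuotientAddGroup.mk x := rfl

lemma level_zero_eq (VM : AddMonoid.End M)
    (a b : M ⧸ ((VM ^ 0 : AddMonoid.End M)).range) : a = b := by
  obtain ⟨x, rfl⟩ := QuotientAddGroup.mk_surjective a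
  obtain ⟨y, rfl⟩ := QuotientAddGroup.mk_surjective b
  rw [QuotientAddGroup.eq]
  exact ⟨-x + y, end_pow_zero_apply VM _⟩

lemma proj_map_comm (VM : AddMonoid.End M) (VN : AddMonoid.End N) (f : M →+ N)
    (hf : ∀ x, f (VM x) = VN (f x)) (n : ℕ)
    (a : M ⧸ ((VM ^ (n + 1) : AddMonoid.End M)).range) :
    towerProj VN n (towerMap VM VN f hf (n + 1) a) =
      towerMap VM VN f hf n (towerProj VM n a) := by
  obtain ⟨x, rfl⟩ := QuotientAddGroup.mk_surjective a
  rfl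

end Stmt11Aux
namespace Stmt11Aux

variable {M N : Type*} [AddCommGroup M] [AddCommGroup N]

/-- The map `M/VⁿM → M/Vⁿ⁺¹M` induced by `V`. -/
noncomputable def vShift (VM : AddMonoid.End M) (n : ℕ) :
    M ⧸ ((VM ^ n : AddMonoid.End M)).range →+
      M ⧸ ((VM ^ (n + 1) : AddMonoid.End M)).range :=
  QuotientAddGroup.map _ _ VM (by
    rintro x ⟨m, rfl⟩
    exact ⟨m, end_pow_apply' VM n m⟩)

lemma vShift_mk (VM : AddMonoid.End M) (n : ℕ) (x : M) :
    vShift VM n (QuotientAddGroup.mk x) = QuotientAddGroup.mk (VM x) := rfl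

lemma proj_vShift (VM : AddMonoid.End M) (n : ℕ)
    (a : M ⧸ ((VM ^ (n + 1) : AddMonoid.End M)).range) :
    towerProj VM (n + 1) (vShift VM (n + 1) a) = vShift VM n (towerProj VM n a) := by
  obtain ⟨x, rfl⟩ := QuotientAddGroup.mk_surjective a
  rfl

/-- Bijectivity at level 1 propagates to all levels (needs `V` injective). -/
lemma bij_all (VM : AddMonoid.End M) (VN : AddMonoid.End N)
    (hVMinj : Function.Injective VM) (hVNinj : Function.Injective VN)
    (f : M →+ N) (hf : ∀ x, f (VM x) = VN (f x))
    (h1 : Function.Bijective (towerMap VM VN f hf 1)) (n : ℕ) :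
    Function.Bijective (towerMap VM VN f hf n) := by
  induction n with
  | zero =>
      exact ⟨fun a b _ => level_zero_eq VM a b,
        fun b => ⟨QuotientAddGroup.mk 0, level_zero_eq VN _ _⟩⟩
  | succ n ih =>
      constructor
      · rw [injective_iff_map_eq_zero]
        intro a ha
        obtain ⟨x, rfl⟩ := QuotientAddGroup.mk_surjective a
        rw [towerMap_mk, QuotientAddGroup.eq_zero_iff] at ha
        obtain ⟨c, hc⟩ := ha
        change (VN ^ (n + 1)) c = f x at hc
        -- f x = VN^{n+1} c, so towerMap n [x] = 0
        have hxn : towerMap VM VN f hf n (QuotientAddGroup.mk x) = 0 := by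
          rw [towerMap_mk, QuotientAddGroup.eq_zero_iff]
          exact ⟨VN c, by change (VN ^ n) (VN c) = f x; rw [← end_pow_apply]; exact hc⟩
        have hx0 : (QuotientAddGroup.mk x :
            M ⧸ ((VM ^ n : AddMonoid.End M)).range) = 0 :=
          (injective_iff_map_eq_zero _).mp ih.injective _ hxn
        rw [QuotientAddGroup.eq_zero_iff] at hx0
        obtain ⟨u, hu⟩ := hx0
        change (VM ^ n) u = x at hu
        -- x = VM^n u ; then VN^n (f u) = VN^n (VN c)
        have h2 : (VN ^ n) (f u) = (VN ^ n) (VN c) := by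
          rw [← map_pow_comm VM VN f hf, hu, ← hc, end_pow_apply]
        have h3 : f u = VN c := pow_inj VN hVNinj n h2
        have h4 : towerMap VM VN f hf 1 (QuotientAddGroup.mk u) = 0 := by
          rw [towerMap_mk, QuotientAddGroup.eq_zero_iff]
          exact ⟨c, by rw [pow_one, h3]; rfl⟩
        have h5 : (QuotientAddGroup.mk u :
            M ⧸ ((VM ^ 1 : AddMonoid.End M)).range) = 0 :=
          (injective_iff_map_eq_zero _).mp h1.injective _ h4
        rw [QuotientAddGroup.eq_zero_iff] at h5
        obtain ⟨v, hv⟩ := h5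
        rw [pow_one] at hv
        change VM v = u at hv
        rw [QuotientAddGroup.eq_zero_iff]
        refine ⟨v, ?_⟩
        show (VM ^ (n + 1)) v = x; rw [end_pow_apply, hv, hu]
      · intro b
        obtain ⟨y, rfl⟩ := QuotientAddGroup.mk_surjective b
        obtain ⟨a, ha⟩ := ih.surjective (QuotientAddGroup.mk y)
        obtain ⟨x, rfl⟩ := QuotientAddGroup.mk_surjective a
        rw [towerMap_mk, QuotientAddGroup.eq] at ha
        obtain ⟨c, hc⟩ := ha
        change (VN ^ n) c = -f x + y at hc
        obtain ⟨a', ha'⟩ := h1.surjective (QuotientAddGroup.mk c)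
        obtain ⟨u, rfl⟩ := QuotientAddGroup.mk_surjective a'
        rw [towerMap_mk, QuotientAddGroup.eq] at ha'
        obtain ⟨d, hd⟩ := ha'
        refine ⟨QuotientAddGroup.mk (x + (VM ^ n) u), ?_⟩
        rw [towerMap_mk, QuotientAddGroup.eq]
        refine ⟨d, ?_⟩
        have hfadd : f (x + (VM ^ n) u) = f x + (VN ^ n) (f u) := by
          rw [map_add, map_pow_comm VM VN f hf]
        have hd' : VN d = -f u + c := by rw [← hd, pow_one]; rfl
        have hy : y = f x + (VN ^ n) c := by rw [hc]; abel
        show (VN ^ (n + 1)) d = -f (x + (VM ^ n) u) + y; rw [end_pow_apply, hd', map_add, map_neg, hfadd, hy]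
        abel

end Stmt11Aux
/-- if `f : M → N` is a homomorphism of `p`-typical Cartier modules with
`V` injective on both, then the induced map on `V`-adic completions is an isomorphism
iff the induced map `M/VM → N/VN` is an isomorphism. -/
theorem stmt_11 (p : ℕ) (hp : p.Prime)
    {M N : Type*} [AddCommGroup M] [AddCommGroup N]
    (FM VM : AddMonoid.End M) (FN VN : AddMonoid.End N)
    (hM : ∀ x, FM (VM x) = p • x) (hN : ∀ x, FN (VN x) = p • x)
    (hVMinj : Function.Injective VM) (hVNinj : Function.Injective VN)
    (f : M →+ N) (hfF : ∀ x, f (FM x) = FN (f x)) (hfV : ∀ x, f (VM x) = VN (f x)) :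
    Function.Bijective (towerLimMap VM VN f hfV) ↔
      Function.Bijective (towerMap VM VN f hfV 1) := by
  open Stmt11Aux in
  constructor
  · intro hlim
    constructor
    · -- injectivity of the level-1 map
      rw [injective_iff_map_eq_zero]
      intro a ha
      obtain ⟨x, rfl⟩ := QuotientAddGroup.mk_surjective a
      rw [towerMap_mk, QuotientAddGroup.eq_zero_iff] at ha
      obtain ⟨y, hy⟩ := ha
      rw [pow_one] at hy
      change VN y = f x at hy
      -- the constant tower at y
      set yhat : towerLim VN := ⟨fun n => QuotientAddGroup.mk y, fun n => rfl⟩ with hyhat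
      obtain ⟨z, hz⟩ := hlim.surjective yhat
      have hzc : ∀ n, towerMap VM VN f hfV n (z.1 n) = QuotientAddGroup.mk y :=
        fun n => congrFun (congrArg Subtype.val hz) n
      -- the constant tower at x
      set xhat : towerLim VM := ⟨fun n => QuotientAddGroup.mk x, fun n => rfl⟩ with hxhat
      -- the shifted tower V∘z
      set w : towerLim VM := ⟨fun n => Nat.rec 0 (fun m _ => vShift VM m (z.1 m)) n,
        by
          intro n
          cases n with
          | zero => exact level_zero_eq VM _ _
          | succ m =>
              show towerProj VM (m + 1) (vShift VM (m + 1) (z.1 (m + 1))) =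
                vShift VM m (z.1 m)
              rw [proj_vShift, z.2 m]⟩ with hw
      have key : towerLimMap VM VN f hfV xhat = towerLimMap VM VN f hfV w := by
        refine Subtype.ext (funext fun n => ?_)
        cases n with
        | zero => exact level_zero_eq VN _ _
        | succ m =>
            show towerMap VM VN f hfV (m + 1) (QuotientAddGroup.mk x) =
              towerMap VM VN f hfV (m + 1) (vShift VM m (z.1 m))
            obtain ⟨u, hu⟩ := QuotientAddGroup.mk_surjective (z.1 m)
            have hum := hzc m
            rw [← hu, towerMap_mk, QuotientAddGroup.eq] at hum
            obtain ⟨c, hc⟩ := hum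
            change (VN ^ m) c = -f u + y at hc
            rw [← hu, vShift_mk, towerMap_mk, towerMap_mk, hfV, QuotientAddGroup.eq]
            refine ⟨-c, ?_⟩
            show (VN ^ (m + 1)) (-c) = -f x + VN (f u); rw [map_neg, end_pow_apply', hc, ← hy, map_add, map_neg]
            abel
      have hxw : xhat = w := hlim.injective key
      have h1 : xhat.1 1 = w.1 1 := congrFun (congrArg Subtype.val hxw) 1
      obtain ⟨m, hm⟩ := QuotientAddGroup.mk_surjective (z.1 0)
      have h2 : w.1 1 = QuotientAddGroup.mk (VM m) := by
        show vShift VM 0 (z.1 0) = _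
        rw [← hm, vShift_mk]
      have : (QuotientAddGroup.mk x : M ⧸ ((VM ^ 1 : AddMonoid.End M)).range) =
          QuotientAddGroup.mk (VM m) := h1.trans h2
      rw [this, QuotientAddGroup.eq_zero_iff]
      exact ⟨m, by rw [pow_one]; rfl⟩
    · -- surjectivity of the level-1 map
      intro b
      obtain ⟨y, rfl⟩ := QuotientAddGroup.mk_surjective b
      obtain ⟨g, hg⟩ := hlim.surjective
        ⟨fun n => QuotientAddGroup.mk y, fun n => rfl⟩
      exact ⟨g.1 1, congrFun (congrArg Subtype.val hg) 1⟩
  · intro h1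
    have hbij := bij_all VM VN hVMinj hVNinj f hfV h1
    constructor
    · intro g h hgh
      refine Subtype.ext (funext fun n => ?_)
      exact (hbij n).injective (congrFun (congrArg Subtype.val hgh) n)
    · intro h
      choose g hg using fun n => (hbij n).surjective (h.1 n)
      refine ⟨⟨g, fun n => ?_⟩, Subtype.ext (funext fun n => hg n)⟩
      apply (hbij n).injective
      rw [← proj_map_comm, hg (n + 1), hg n]
      exact h.2 n
end
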